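/- Let G be a finite subgroup of the unitary group U(n) generated by unitary reflections, and let f₁, …, f_n be homogeneous, algebraically independent polynomials generating the algebra ℂ[z₁, …, z_n]^G of G-invariant polynomials. Then the polynomial map f : ℂⁿ → ℂⁿ, v ↦ (f₁(v), …, f_n(v)), is a proper map: the preimage of every compact subset of ℂⁿ is compact. In particular, f is a closed map. -/

import Mathlib

noncomputable section

/-- The unitary group `U(n)` of `ℂⁿ`, realized as the unitary group of `n × n`
complex matrices. -/
abbrev UGrp (n : ℕ) := Matrix.unitaryGroup (Fin n) ℂ

/-- The natural action of `U(n)` on `ℂⁿ` by matrix-vector multiplication. -/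
instance {n : ℕ} : MulAction (UGrp n) (Fin n → ℂ) where
  smul g v := Matrix.mulVec g.1 v
  one_smul v := Matrix.one_mulVec v
  mul_smul g h v := (Matrix.mulVec_mulVec v g.1 h.1).symm

/-- A unitary reflection: an element of `U(n)` of finite order whose fixed-point
subspace `{v : gv = v}` is a complex hyperplane (complex dimension `n - 1`). -/
def IsUnitaryReflection {n : ℕ} (g : UGrp n) : Prop :=
  IsOfFinOrder g ∧
  Module.finrank ℂ ↥(LinearMap.ker ((g.1 - 1).mulVecLin)) + 1 = n

/-!
A homogeneous polynomial map `F` of positive degrees whose only common zero is the origin is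
proper: on the unit sphere `‖F‖` has a positive minimum `ε`, and homogeneity gives
`‖F v‖ ≥ ε ‖v‖` for `‖v‖ ≥ 1`.

For basic invariants the common zero locus is `{0}`. If all `fᵢ(u) = 0` then, since the `fᵢ` have
positive degree and generate the invariants, no invariant separates `u` from `0`. The coefficients
of `∏_{g ∈ G} (T - ⟪u, g v⟫)` are invariant polynomials in `v`, so at `v = u` this product is
`T ^ |G|`; the factor `g = 1` then forces `‖u‖² = 0`.
-/

namespace MvPolynomial

section Homogeneous

variable {σ R : Type*} [CommSemiring R] {φ : MvPolynomial σ R} {n : ℕ}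

theorem IsHomogeneous.eval_smul (hφ : φ.IsHomogeneous n) (c : R) (v : σ → R) :
    eval (c • v) φ = c ^ n * eval v φ := by
  simp only [eval_eq, Finset.mul_sum]
  refine Finset.sum_congr rfl fun s hs => ?_
  have hdeg : ∑ i ∈ s.support, s i = n := hφ.degree_eq_sum_deg_support hs ▸ rfl
  simp only [Pi.smul_apply, smul_eq_mul, mul_pow, Finset.prod_mul_distrib,
    Finset.prod_pow_eq_pow_sum, hdeg]
  ring

theorem IsHomogeneous.eval_zero (hφ : φ.IsHomogeneous n) (hn : n ≠ 0) : eval 0 φ = 0 := by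
  simpa [zero_pow hn] using hφ.eval_smul 0 0

theorem IsHomogeneous.ne_zero_of_transcendental {R : Type*} [CommRing R] [Nontrivial R]
    {φ : MvPolynomial σ R} (hφ : φ.IsHomogeneous n) (ht : Transcendental R φ) : n ≠ 0 := by
  rintro rfl
  rw [totalDegree_eq_zero_iff_eq_C.mp (Nat.le_zero.mp hφ.totalDegree_le), ← algebraMap_eq] at ht
  exact ht (isAlgebraic_algebraMap _)

end Homogeneous

theorem eval_eq_of_mem_adjoin {σ ι R : Type*} [CommSemiring R] {f : ι → MvPolynomial σ R}
    {u w : σ → R} (h : ∀ i, eval u (f i) = eval w (f i)) {p : MvPolynomial σ R}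
    (hp : p ∈ Algebra.adjoin R (Set.range f)) : eval u p = eval w p :=
  (AlgHom.eqOn_adjoin_iff (φ := aeval u) (ψ := aeval w)).mpr (by rintro _ ⟨i, rfl⟩; exact h i) hp

section Invariants

open Matrix

variable {ι K : Type*} [Fintype ι] [CommRing K]

def linearForm (a : ι → K) : MvPolynomial ι K :=
  ∑ j, C (a j) * X j

@[simp]
theorem eval_linearForm (a v : ι → K) : eval v (linearForm a) = a ⬝ᵥ v := by
  simp [linearForm, dotProduct]

variable [DecidableEq ι]

def IsInvariant {G : Type*} [Monoid G] (ρ : G →* Matrix ι ι K) (p : MvPolynomial ι K) : Prop :=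
  ∀ g v, eval (ρ g *ᵥ v) p = eval v p

variable {G : Type*} [Group G] [Fintype G] (ρ : G →* Matrix ι ι K)

def orbitPoly (a : ι → K) : Polynomial (MvPolynomial ι K) :=
  ∏ g, (Polynomial.X - Polynomial.C (linearForm (a ᵥ* ρ g)))

theorem map_eval_orbitPoly (a v : ι → K) :
    (orbitPoly ρ a).map (eval v) = ∏ g, (Polynomial.X - Polynomial.C (a ⬝ᵥ (ρ g *ᵥ v))) := by
  simp [orbitPoly, Polynomial.map_prod, dotProduct_mulVec]

theorem isInvariant_coeff_orbitPoly (a : ι → K) (k : ℕ) :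
    IsInvariant ρ ((orbitPoly ρ a).coeff k) := by
  intro h v
  rw [← Polynomial.coeff_map, ← Polynomial.coeff_map, map_eval_orbitPoly, map_eval_orbitPoly]
  congr 1
  exact Fintype.prod_equiv (Equiv.mulRight h) _ _ fun g => by simp [mulVec_mulVec]

theorem dotProduct_mulVec_eq_zero_of_forall_isInvariant [IsDomain K] {u : ι → K}
    (hu : ∀ p, IsInvariant ρ p → eval u p = eval 0 p) (a : ι → K) (g : G) :
    a ⬝ᵥ (ρ g *ᵥ u) = 0 := by
  have hmap : (orbitPoly ρ a).map (eval u) = Polynomial.X ^ Fintype.card G :=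
    calc (orbitPoly ρ a).map (eval u)
        = (orbitPoly ρ a).map (eval 0) := by
          ext k
          simp only [Polynomial.coeff_map]
          exact hu _ (isInvariant_coeff_orbitPoly ρ a k)
      _ = Polynomial.X ^ Fintype.card G := by rw [map_eval_orbitPoly]; simp
  have hroot : ((orbitPoly ρ a).map (eval u)).eval (a ⬝ᵥ (ρ g *ᵥ u)) = 0 := by
    rw [map_eval_orbitPoly, Polynomial.eval_prod]
    exact Finset.prod_eq_zero (Finset.mem_univ g) (by simp)
  rw [hmap, Polynomial.eval_pow, Polynomial.eval_X] at hroot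
  exact (pow_eq_zero_iff Fintype.card_ne_zero).mp hroot

theorem eq_zero_of_forall_isInvariant {R : Type*} [CommRing R] [IsDomain R] [StarRing R]
    [PartialOrder R] [StarOrderedRing R] (ρ : G →* Matrix ι ι R) {u : ι → R}
    (hu : ∀ p, IsInvariant ρ p → eval u p = eval 0 p) : u = 0 :=
  dotProduct_star_self_eq_zero.mp <| by
    simpa using dotProduct_mulVec_eq_zero_of_forall_isInvariant ρ hu (star u) 1

end Invariants

section PolynomialMap

open Filter

variable {ι κ : Type*} [Fintype κ] {f : κ → MvPolynomial ι ℂ} {d : κ → ℕ}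

theorem norm_mul_norm_eval_le_norm_eval_smul (hf : ∀ i, (f i).IsHomogeneous (d i))
    (hd : ∀ i, d i ≠ 0) {c : ℂ} (hc : 1 ≤ ‖c‖) (v : ι → ℂ) :
    ‖c‖ * ‖fun i => eval v (f i)‖ ≤ ‖fun i => eval (c • v) (f i)‖ := by
  rw [← norm_smul]
  refine (pi_norm_le_iff_of_nonneg (norm_nonneg _)).2 fun i => ?_
  calc ‖c * eval v (f i)‖ ≤ ‖c‖ ^ d i * ‖eval v (f i)‖ := by
        rw [norm_mul]; gcongr; exact le_self_pow₀ hc (hd i)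
    _ = ‖eval (c • v) (f i)‖ := by rw [(hf i).eval_smul, norm_mul, norm_pow]
    _ ≤ _ := norm_le_pi_norm (fun i => eval (c • v) (f i)) i

variable [Fintype ι]

theorem exists_pos_mul_norm_le_norm_eval (hf : ∀ i, (f i).IsHomogeneous (d i))
    (hd : ∀ i, d i ≠ 0) (hzero : ∀ u : ι → ℂ, (∀ i, eval u (f i) = 0) → u = 0) :
    ∃ ε > 0, ∀ v : ι → ℂ, 1 ≤ ‖v‖ → ε * ‖v‖ ≤ ‖fun i => eval v (f i)‖ := by
  have hcont : Continuous fun v : ι → ℂ => ‖fun i => eval v (f i)‖ :=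
    (continuous_pi fun i => continuous_eval (f i)).norm
  have hpos : ∀ u ∈ Metric.sphere (0 : ι → ℂ) 1, 0 < ‖fun i => eval u (f i)‖ := by
    intro u hu
    refine norm_pos_iff.2 fun h => ?_
    simp [hzero u fun i => congr_fun h i] at hu
  obtain ⟨ε, hε, hmin⟩ := (isCompact_sphere _ _).exists_forall_le' hcont.continuousOn hpos
  refine ⟨ε, hε, fun v hv => ?_⟩
  have hv0 : ‖v‖ ≠ 0 := (zero_lt_one.trans_le hv).ne'
  have hu : (‖v‖ : ℂ)⁻¹ • v ∈ Metric.sphere (0 : ι → ℂ) 1 := by simp [norm_smul, hv0]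
  calc ε * ‖v‖ = ‖(‖v‖ : ℂ)‖ * ε := by simp [mul_comm]
    _ ≤ ‖(‖v‖ : ℂ)‖ * ‖fun i => eval ((‖v‖ : ℂ)⁻¹ • v) (f i)‖ := by gcongr; exact hmin _ hu
    _ ≤ ‖fun i => eval v (f i)‖ := by
        have key := norm_mul_norm_eval_le_norm_eval_smul hf hd (c := ‖v‖) (by simpa using hv)
          ((‖v‖ : ℂ)⁻¹ • v)
        rwa [smul_inv_smul₀ (Complex.ofReal_ne_zero.2 hv0)] at key

theorem isProperMap_eval_of_isHomogeneous (hf : ∀ i, (f i).IsHomogeneous (d i))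
    (hd : ∀ i, d i ≠ 0) (hzero : ∀ u : ι → ℂ, (∀ i, eval u (f i) = 0) → u = 0) :
    IsProperMap fun v : ι → ℂ => fun i => eval v (f i) := by
  obtain ⟨ε, hε, hle⟩ := exists_pos_mul_norm_le_norm_eval hf hd hzero
  rw [isProperMap_iff_tendsto_cocompact, ← Metric.cobounded_eq_cocompact,
    ← Metric.cobounded_eq_cocompact, ← tendsto_norm_atTop_iff_cobounded]
  refine ⟨continuous_pi fun i => continuous_eval (f i),
    tendsto_atTop_mono' _ ?_ (tendsto_norm_cobounded_atTop.const_mul_atTop hε)⟩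
  filter_upwards [eventually_cobounded_le_norm 1] with v hv using hle v hv

end PolynomialMap

end MvPolynomial

theorem stmt_9_general (n : ℕ) (G : Subgroup (UGrp n)) [Finite G]
    (f : Fin n → MvPolynomial (Fin n) ℂ) (d : Fin n → ℕ)
    (hhom : ∀ i, (f i).IsHomogeneous (d i))
    (hindep : AlgebraicIndependent ℂ f)
    (hgenalg : ∀ p : MvPolynomial (Fin n) ℂ,
      (∀ g ∈ G, ∀ v : Fin n → ℂ,
        MvPolynomial.eval (Matrix.mulVec (g : UGrp n).1 v) p = MvPolynomial.eval v p) →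
      p ∈ Algebra.adjoin ℂ (Set.range f)) :
    (∀ K : Set (Fin n → ℂ), IsCompact K →
      IsCompact ((fun v : Fin n → ℂ => fun i => MvPolynomial.eval v (f i)) ⁻¹' K)) ∧
    IsClosedMap (fun v : Fin n → ℂ => fun i => MvPolynomial.eval v (f i)) := by
  have : Fintype G := Fintype.ofFinite G
  let ρ : G →* Matrix (Fin n) (Fin n) ℂ := (Matrix.unitaryGroup (Fin n) ℂ).subtype.comp G.subtype
  have hd : ∀ i, d i ≠ 0 := fun i => (hhom i).ne_zero_of_transcendental (hindep.transcendental i)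
  have hzero : ∀ u : Fin n → ℂ, (∀ i, MvPolynomial.eval u (f i) = 0) → u = 0 := by
    intro u hu
    open scoped ComplexOrder in
    refine MvPolynomial.eq_zero_of_forall_isInvariant ρ fun p hp => ?_
    refine MvPolynomial.eval_eq_of_mem_adjoin (fun i => ?_) (hgenalg p fun g hg => hp ⟨g, hg⟩)
    rw [hu i, (hhom i).eval_zero (hd i)]
  have hF := MvPolynomial.isProperMap_eval_of_isHomogeneous hhom hd hzero
  exact ⟨fun K hK => hF.isCompact_preimage hK, hF.isClosedMap⟩

/-- If `G ≤ U(n)` is a finite unitary reflection group and `f₁, …, f_n` are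
homogeneous, algebraically independent generators of the algebra of `G`-invariant
polynomials, then the map `v ↦ (f₁(v), …, f_n(v))` is proper (preimages of compact
sets are compact); in particular it is a closed map. -/
theorem stmt_9 (n : ℕ) (G : Subgroup (UGrp n)) [Finite G]
    (hgen : Subgroup.closure {g : UGrp n | g ∈ G ∧ IsUnitaryReflection g} = G)
    (f : Fin n → MvPolynomial (Fin n) ℂ) (d : Fin n → ℕ)
    (hhom : ∀ i, (f i).IsHomogeneous (d i))
    (hindep : AlgebraicIndependent ℂ f)
    (hinv : ∀ i, ∀ g ∈ G, ∀ v : Fin n → ℂ,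
      MvPolynomial.eval (Matrix.mulVec (g : UGrp n).1 v) (f i) = MvPolynomial.eval v (f i))
    (hgenalg : ∀ p : MvPolynomial (Fin n) ℂ,
      (∀ g ∈ G, ∀ v : Fin n → ℂ,
        MvPolynomial.eval (Matrix.mulVec (g : UGrp n).1 v) p = MvPolynomial.eval v p) →
      p ∈ Algebra.adjoin ℂ (Set.range f)) :
    (∀ K : Set (Fin n → ℂ), IsCompact K →
      IsCompact ((fun v : Fin n → ℂ => fun i => MvPolynomial.eval v (f i)) ⁻¹' K)) ∧
    IsClosedMap (fun v : Fin n → ℂ => fun i => MvPolynomial.eval v (f i)) :=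
  stmt_9_general n G f d hhom hindep hgenalg
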